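/- The and-mask m_s^∧ is optimal for the conjunction context: if m' is a mask with m'(t₀) = false while m_s^∧(t₀) = true (i.e., s(t₀) ∈ {T, U}), then taking w(t) ≡ F one has (s ∧ (w|_{m'}))(t₀) = U while (s ∧ (w|_{m_s^∧}))(t₀) = F, so m' is not sufficient. -/

import Mathlib

inductive TV : Type | T | F | U
deriving DecidableEq

open TV Set Pointwise

def maskApply (s : ℝ → TV) (m : ℝ → Bool) : ℝ → TV :=
  fun t => if m t then s t else TV.U

def tvNot : TV → TV
  | TV.T => TV.F | TV.F => TV.T | TV.U => TV.U

def tvOr : TV → TV → TV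
  | TV.T, _ => TV.T
  | _, TV.T => TV.T
  | TV.F, TV.F => TV.F
  | _, _ => TV.U

def tvAnd : TV → TV → TV
  | TV.F, _ => TV.F
  | _, TV.F => TV.F
  | TV.T, TV.T => TV.T
  | _, _ => TV.U

open Classical in
noncomputable def evOp (a b : ℝ) (s : ℝ → TV) : ℝ → TV :=
  fun t =>
    if ∃ t' ∈ Set.Icc (t + a) (t + b), s t' = TV.T then TV.T
    else if ∀ t' ∈ Set.Icc (t + a) (t + b), s t' = TV.F then TV.F
    else TV.U

open Classical in
noncomputable def glOp (a b : ℝ) (s : ℝ → TV) : ℝ → TV :=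
  fun t =>
    if ∃ t' ∈ Set.Icc (t + a) (t + b), s t' = TV.F then TV.F
    else if ∀ t' ∈ Set.Icc (t + a) (t + b), s t' = TV.T then TV.T
    else TV.U

open Classical in
noncomputable def pastMask (a b : ℝ) (m : ℝ → Bool) : ℝ → Bool :=
  fun t => decide (∃ t'' ∈ Set.Icc (t - b) (t - a) ∩ Set.Ici (0:ℝ), m t'' = true)

def orMask (s : ℝ → TV) : ℝ → Bool := fun t => !(s t == TV.T)

def andMask (s : ℝ → TV) : ℝ → Bool := fun t => !(s t == TV.F)

def Hset (a b : ℝ) (S : Set ℝ) : Set ℝ := {t | Set.Icc (t - b) (t - a) ⊆ S}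

def Pset (a b : ℝ) (S : Set ℝ) : Set ℝ := {t | ∃ t' ∈ Set.Icc (t - b) (t - a), t' ∈ S}
theorem tvAnd_F_right (a : TV) : tvAnd a F = F := by
  cases a <;> rfl

theorem tvAnd_U_right_of_ne_F {a : TV} (ha : a ≠ F) : tvAnd a U = U := by
  cases a <;> first | rfl | contradiction

theorem maskApply_of_true {s : ℝ → TV} {m : ℝ → Bool} {t : ℝ} (h : m t = true) :
    maskApply s m t = s t := by
  simp [maskApply, h]

theorem maskApply_of_false {s : ℝ → TV} {m : ℝ → Bool} {t : ℝ} (h : m t = false) :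
    maskApply s m t = U := by
  simp [maskApply, h]

theorem andMask_eq_true_iff {s : ℝ → TV} {t : ℝ} : andMask s t = true ↔ s t ≠ F := by
  simp [andMask]

theorem andMask_optimal (s : ℝ → TV) (m' : ℝ → Bool) (t₀ : ℝ)
    (h₀ : m' t₀ = false) (hs : andMask s t₀ = true) :
    tvAnd (s t₀) (maskApply (fun _ => TV.F) m' t₀) = TV.U ∧
    tvAnd (s t₀) (maskApply (fun _ => TV.F) (andMask s) t₀) = TV.F := by
  rw [maskApply_of_false h₀, maskApply_of_true hs]
  exact ⟨tvAnd_U_right_of_ne_F (andMask_eq_true_iff.mp hs), tvAnd_F_right _⟩
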